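/- arXiv:1312.4639 — 3 statements merged into one kernel-verified Lean document; each statement's English description precedes it below -/
import Mathlib

section
/- For all natural numbers m, k ≥ 1 and r ≥ 1 there exists a natural number n such that for every coloring c : FIN_k(n) → {0,…,r−1} there exists a block sequence (f_i)_{i<m} of length m of elements of FIN_k(n) such that c is constant on the combinatorial space ⟨f_i⟩_{i<m}. -/
/-- `f` is a member of `FIN_k`: finitely supported `ℕ`-valued function with
values `≤ k` that attains the value `k`. -/
def IsFINk (k : ℕ) (f : ℕ →₀ ℕ) : Prop :=
  (∀ n, f n ≤ k) ∧ (∃ n, f n = k)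

/-- `FIN_k(N)`: the members of `FIN_k` supported inside `{0, …, N-1}`. -/
def FINkN (k N : ℕ) : Set (ℕ →₀ ℕ) :=
  {f | IsFINk k f ∧ ∀ n ∈ f.support, n < N}

/-- The block relation `f < g`: the support of `f` lies entirely below the support of `g`. -/
def Blk (f g : ℕ →₀ ℕ) : Prop :=
  ∀ i ∈ f.support, ∀ j ∈ g.support, i < j

/-- The Tetris operation `(T f)(x) = max {0, f x - 1}`. -/
noncomputable def Tetris (f : ℕ →₀ ℕ) : ℕ →₀ ℕ :=
  Finsupp.mapRange (· - 1) (by simp) f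

/-- `(F i)_{i<m}` is a block sequence of length `m`. -/
def IsBlockSeqFin (m : ℕ) (F : ℕ → (ℕ →₀ ℕ)) : Prop :=
  ∀ i j : ℕ, i < j → j < m → Blk (F i) (F j)

/-- `(G i)_{i<d}` is a block sequence (a `d`-tuple version). -/
def IsBlockTuple (d : ℕ) (G : Fin d → (ℕ →₀ ℕ)) : Prop :=
  ∀ i j : Fin d, i < j → Blk (G i) (G j)

/-- The combinatorial space `⟨F i⟩_{i<m}` generated by a block sequence `(F i)_{i<m}`:
all sums `T^{l_1}(f_{i_1}) + … + T^{l_p}(f_{i_p})` with `i_1 < … < i_p < m` and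
`min {l_1, …, l_p} = 0`. -/
def CombSpace (m : ℕ) (F : ℕ → (ℕ →₀ ℕ)) : Set (ℕ →₀ ℕ) :=
  {g | ∃ (s : Finset ℕ) (l : ℕ → ℕ), s.Nonempty ∧ (∀ i ∈ s, i < m) ∧
      (∃ i ∈ s, l i = 0) ∧ g = ∑ i ∈ s, Tetris^[l i] (F i)}

/-!
Gowers' proof with idempotent ultrafilters. On `ℕ →₀ ℕ` there are ultrafilters
`p 0 = pure 0, p 1, …, p k` such that `p j` lives on `FIN_j`, almost all of its elements lie
after any given one, `Tetris` maps `p (j + 1)` to `p j`, and `p a + p b = p (max a b)`.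
The next one, `p (k + 1)`, is `p k + V` for an idempotent `V` of the closed (hence compact)
semigroup of ultrafilters `V` on `FIN_(k+1)` with `Tetris V = p k` and `V + p i = V` for `i ≤ k`.

Given `A ∈ p k`, pick `f_0, f_1, …` one at a time, each from a `p k`-large set. Since
`Tetris^[l]` maps `p k` to `p (k - l)` and `p j + p k = p k`, every sum `g` of the `T^l f_i`
chosen so far keeps `g + h ∈ A` for `p k`-almost all `h`; once some `f_i` has entered
untouched, `p a + p b = p (max a b)` upgrades this to "for `p j`-almost all `h`, for every
`j ≤ k`", and `j = 0` gives `g ∈ A`.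
With `A` a colour class this is the theorem for colourings of all of `ℕ →₀ ℕ`. The finite
version follows by compactness: combinatorial spaces are finite, so a limit, along an
ultrafilter on `n`, of counterexample colourings of `FIN_k(n)` would have no monochromatic one.
-/

open Filter Set
open scoped Pointwise

attribute [local instance] Ultrafilter.add Ultrafilter.addSemigroup

lemma Ultrafilter.exists_eventually_eq {α β : Type*} [Finite β] (U : Ultrafilter α) (c : α → β) :
    ∃ b, ∀ᶠ x in (U : Filter α), c x = b := by
  obtain ⟨b, hb⟩ := (U.map c).eq_pure_of_finite
  exact ⟨b, show ({b} : Set β) ∈ U.map c from hb ▸ rfl⟩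

section Tetris

lemma tetris_apply (f : ℕ →₀ ℕ) (x : ℕ) : Tetris f x = f x - 1 := rfl

lemma tetris_iterate_apply (l : ℕ) (f : ℕ →₀ ℕ) (x : ℕ) : (Tetris^[l] f) x = f x - l := by
  induction l generalizing f with
  | zero => rfl
  | succ l ih => rw [Function.iterate_succ_apply, ih, tetris_apply, Nat.sub_sub, Nat.add_comm 1]

lemma tetris_zero : Tetris 0 = 0 :=
  Finsupp.mapRange_zero

lemma tetris_iterate_min {k : ℕ} {f : ℕ →₀ ℕ} (hf : ∀ x, f x ≤ k) (l : ℕ) :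
    Tetris^[min l k] f = Tetris^[l] f := by
  ext x
  simp only [tetris_iterate_apply]
  have := hf x
  omega

lemma finite_range_tetris_iterate (f : ℕ →₀ ℕ) : (range fun l => Tetris^[l] f).Finite := by
  have hf : ∀ x, f x ≤ f.support.sup f := fun x => by
    by_cases hx : x ∈ f.support
    · exact Finset.le_sup hx
    · simp [Finsupp.notMem_support_iff.mp hx]
  refine ((finite_Iic (f.support.sup f)).image fun l => Tetris^[l] f).subset ?_
  rintro _ ⟨l, rfl⟩
  exact ⟨_, mem_Iic.2 (min_le_right _ _), tetris_iterate_min hf l⟩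

lemma Blk.apply_eq_zero_or {f g : ℕ →₀ ℕ} (h : Blk f g) (x : ℕ) : f x = 0 ∨ g x = 0 := by
  by_contra! hx
  exact lt_irrefl x
    (h x (Finsupp.mem_support_iff.mpr hx.1) x (Finsupp.mem_support_iff.mpr hx.2))

lemma Blk.add_right {f g h : ℕ →₀ ℕ} (hg : Blk f g) (hh : Blk f h) : Blk f (g + h) := by
  intro i hi j hj
  rcases Finset.mem_union.mp (Finsupp.support_add hj) with hj | hj
  exacts [hg i hi j hj, hh i hi j hj]

lemma tetris_add_of_blk {f g : ℕ →₀ ℕ} (h : Blk f g) : Tetris (f + g) = Tetris f + Tetris g := by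
  ext x
  simp only [Finsupp.add_apply, tetris_apply]
  rcases h.apply_eq_zero_or x with hx | hx <;> simp [hx]

lemma IsFINk.add {a b : ℕ} {f g : ℕ →₀ ℕ} (hf : IsFINk a f) (hg : IsFINk b g) (h : Blk f g) :
    IsFINk (max a b) (f + g) := by
  obtain ⟨hfa, x, hx⟩ := hf
  obtain ⟨hgb, y, hy⟩ := hg
  refine ⟨fun z => ?_, ?_⟩
  · have := hfa z; have := hgb z
    rcases h.apply_eq_zero_or z with hz | hz <;> simp only [Finsupp.add_apply, hz] <;> omega
  · rcases le_total a b with hab | hab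
    · refine ⟨y, ?_⟩
      have := hfa y
      rcases h.apply_eq_zero_or y with hy0 | hy0 <;> simp only [Finsupp.add_apply, hy0] <;> omega
    · refine ⟨x, ?_⟩
      have := hgb x
      rcases h.apply_eq_zero_or x with hx0 | hx0 <;> simp only [Finsupp.add_apply, hx0] <;> omega

lemma isFINk_zero_iff {f : ℕ →₀ ℕ} : IsFINk 0 f ↔ f = 0 := by
  refine ⟨fun hf => Finsupp.ext fun x => Nat.le_zero.mp (hf.1 x), ?_⟩
  rintro rfl
  exact ⟨fun _ => le_rfl, 0, rfl⟩

lemma eventually_support_lt (f : ℕ →₀ ℕ) : ∀ᶠ n in atTop, ∀ x ∈ f.support, x < n :=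
  (Finset.eventually_all _).2 fun x _ => eventually_gt_atTop x

end Tetris

section Ultrafilters

def blockUltrafilters : Set (Ultrafilter (ℕ →₀ ℕ)) :=
  {U | ∀ f, ∀ᶠ g in (U : Filter (ℕ →₀ ℕ)), Blk f g}

def gammaFIN (k : ℕ) : Set (Ultrafilter (ℕ →₀ ℕ)) :=
  {U | U ∈ blockUltrafilters ∧ ∀ᶠ g in (U : Filter (ℕ →₀ ℕ)), IsFINk k g}

lemma isClosed_gammaFIN (k : ℕ) : IsClosed (gammaFIN k) := by
  refine IsClosed.inter ?_ (ultrafilter_isClosed_basic _)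
  simp only [blockUltrafilters, ofPred_forall]
  exact isClosed_iInter fun f => ultrafilter_isClosed_basic _

lemma add_mem_blockUltrafilters {U V : Ultrafilter (ℕ →₀ ℕ)} (hU : U ∈ blockUltrafilters)
    (hV : V ∈ blockUltrafilters) : U + V ∈ blockUltrafilters := fun f =>
  (hU f).mono fun _ hg => (hV f).mono fun _ hh => hg.add_right hh

lemma add_mem_gammaFIN {a b : ℕ} {U V : Ultrafilter (ℕ →₀ ℕ)} (hU : U ∈ gammaFIN a)
    (hV : V ∈ gammaFIN b) : U + V ∈ gammaFIN (max a b) :=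
  ⟨add_mem_blockUltrafilters hU.1 hV.1, hU.2.mono fun f hf =>
    (hV.2.and (hV.1 f)).mono fun _ hg => hf.add hg.1 hg.2⟩

lemma map_tetris_add {U V : Ultrafilter (ℕ →₀ ℕ)} (hV : V ∈ blockUltrafilters) :
    (U + V).map Tetris = U.map Tetris + V.map Tetris := by
  refine Ultrafilter.coe_injective (Filter.ext' fun P => ?_)
  change (∀ᶠ f in (U : Filter _), ∀ᶠ g in (V : Filter _), P (Tetris (f + g))) ↔
    ∀ᶠ f in (U : Filter _), ∀ᶠ g in (V : Filter _), P (Tetris f + Tetris g)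
  refine eventually_congr (Eventually.of_forall fun f =>
    eventually_congr ((hV f).mono fun g hg => ?_))
  rw [tetris_add_of_blk hg]

lemma pure_zero_mem_gammaFIN_zero : (pure 0 : Ultrafilter (ℕ →₀ ℕ)) ∈ gammaFIN 0 :=
  ⟨fun f => eventually_pure.2 fun _ _ _ hj => by simp at hj,
    eventually_pure.2 (isFINk_zero_iff.2 rfl)⟩

lemma eq_pure_zero_of_mem_gammaFIN_zero {U : Ultrafilter (ℕ →₀ ℕ)} (hU : U ∈ gammaFIN 0) :
    U = pure 0 :=
  Ultrafilter.eq_of_le (le_pure_iff.2 (hU.2.mono fun _ hf => isFINk_zero_iff.1 hf))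

lemma map_tetris_pure_zero : (pure 0 : Ultrafilter (ℕ →₀ ℕ)).map Tetris = pure 0 := by
  rw [Ultrafilter.map_pure, tetris_zero]

noncomputable def tetrisLift (f : ℕ →₀ ℕ) : ℕ →₀ ℕ :=
  Finsupp.mapRange (fun x => if x = 0 then 0 else x + 1) (by simp) f

lemma tetrisLift_apply (f : ℕ →₀ ℕ) (x : ℕ) :
    tetrisLift f x = if f x = 0 then 0 else f x + 1 := rfl

lemma tetris_tetrisLift (f : ℕ →₀ ℕ) : Tetris (tetrisLift f) = f := by
  ext x
  rw [tetris_apply, tetrisLift_apply]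
  split <;> omega

lemma support_tetrisLift (f : ℕ →₀ ℕ) : (tetrisLift f).support = f.support := by
  ext x
  simp only [Finsupp.mem_support_iff, tetrisLift_apply]
  split <;> omega

lemma IsFINk.tetrisLift {j : ℕ} (hj : j ≠ 0) {f : ℕ →₀ ℕ} (hf : IsFINk j f) :
    IsFINk (j + 1) (tetrisLift f) := by
  obtain ⟨hfj, x, hx⟩ := hf
  refine ⟨fun y => ?_, x, ?_⟩ <;> rw [tetrisLift_apply]
  · have := hfj y
    split <;> omega
  · simp [hx, hj]

lemma exists_map_tetris_eq {j : ℕ} {V : Ultrafilter (ℕ →₀ ℕ)} (hV : V ∈ gammaFIN j) :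
    ∃ W ∈ gammaFIN (j + 1), W.map Tetris = V := by
  rcases eq_or_ne j 0 with rfl | hj
  · refine ⟨(hyperfilter ℕ).map (Finsupp.single · 1), ⟨fun f => ?_, ?_⟩, ?_⟩
    · refine Nat.hyperfilter_le_atTop ((eventually_support_lt f).mono fun n hn i hi j hj => ?_)
      rw [Finsupp.support_single _ one_ne_zero, Finset.mem_singleton] at hj
      exact hj ▸ hn i hi
    · refine eventually_map.2 (Eventually.of_forall fun n =>
        ⟨fun x => ?_, n, Finsupp.single_eq_same⟩)
      rw [Finsupp.single_apply]
      split <;> omega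
    · rw [eq_pure_zero_of_mem_gammaFIN_zero hV]
      refine Ultrafilter.eq_of_le (le_pure_iff.2 (eventually_map.2 (eventually_map.2
        (Eventually.of_forall fun n => Finsupp.ext fun x => ?_))))
      rw [tetris_apply, Finsupp.single_apply]
      split <;> rfl
  · refine ⟨V.map tetrisLift, ⟨fun f => ?_, ?_⟩, ?_⟩
    · exact eventually_map.2 ((hV.1 f).mono fun g hg => by rwa [Blk, support_tetrisLift])
    · exact eventually_map.2 (hV.2.mono fun g hg => hg.tetrisLift hj)
    · rw [Ultrafilter.map_map, show Tetris ∘ tetrisLift = id from funext tetris_tetrisLift,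
        Ultrafilter.map_id]

end Ultrafilters

section Chain

lemma continuous_ultrafilter_map {α β : Type*} (f : α → β) : Continuous (Ultrafilter.map f) :=
  ultrafilterBasis_is_basis.continuous_iff.2 <| forall_mem_range.2 fun s =>
    ultrafilter_isOpen_basic (f ⁻¹' s)

lemma add_eq_max_update {S : Type*} [AddSemigroup S] {x : ℕ → S} {k : ℕ} {u : S}
    (hx : ∀ a ≤ k, ∀ b ≤ k, x a + x b = x (max a b)) (hu : u + u = u)
    (hxu : ∀ i ≤ k, x i + u = u) (hux : ∀ i ≤ k, u + x i = u) :
    ∀ a ≤ k + 1, ∀ b ≤ k + 1, Function.update x (k + 1) u a + Function.update x (k + 1) u b =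
      Function.update x (k + 1) u (max a b) := by
  intro a ha b hb
  rcases ha.lt_or_eq with ha | rfl <;> rcases hb.lt_or_eq with hb | rfl
  · rw [Function.update_of_ne ha.ne, Function.update_of_ne hb.ne,
      Function.update_of_ne (max_lt ha hb).ne,
      hx a (Nat.lt_succ_iff.mp ha) b (Nat.lt_succ_iff.mp hb)]
  · rw [Function.update_of_ne ha.ne, max_eq_right ha.le, Function.update_self,
      hxu a (Nat.lt_succ_iff.mp ha)]
  · rw [Function.update_of_ne hb.ne, max_eq_left hb.le, Function.update_self,
      hux b (Nat.lt_succ_iff.mp hb)]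
  · rw [max_self, Function.update_self, hu]

structure IsTetrisChain (k : ℕ) (p : ℕ → Ultrafilter (ℕ →₀ ℕ)) : Prop where
  mem_gammaFIN : ∀ j ≤ k, p j ∈ gammaFIN j
  map_tetris : ∀ j < k, (p (j + 1)).map Tetris = p j
  add_eq_max : ∀ a ≤ k, ∀ b ≤ k, p a + p b = p (max a b)

namespace IsTetrisChain

variable {k : ℕ} {p : ℕ → Ultrafilter (ℕ →₀ ℕ)}

lemma zero (hp : IsTetrisChain k p) : p 0 = pure 0 :=
  eq_pure_zero_of_mem_gammaFIN_zero (hp.mem_gammaFIN 0 (Nat.zero_le k))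

lemma map_tetris_iterate (hp : IsTetrisChain k p) {l : ℕ} (hl : l ≤ k) :
    (p k).map Tetris^[l] = p (k - l) := by
  induction l with
  | zero => exact (p k).map_id
  | succ l ih =>
    rw [Function.iterate_succ', ← Ultrafilter.map_map, ih (by omega),
      ← hp.map_tetris (k - (l + 1)) (by omega)]
    congr 2
    omega

lemma map_tetris_self (hp : IsTetrisChain k p) : (p k).map Tetris = p (k - 1) := by
  rcases k with _ | j
  · rw [Nat.zero_sub, hp.zero, map_tetris_pure_zero]
  · exact hp.map_tetris j (Nat.lt_succ_self j)

lemma add_map_tetris_self (hp : IsTetrisChain k p) : p k + (p k).map Tetris = p k := by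
  rw [hp.map_tetris_self, hp.add_eq_max k le_rfl _ (Nat.sub_le k 1),
    max_eq_left (Nat.sub_le k 1)]

lemma map_tetris_self_add (hp : IsTetrisChain k p) : (p k).map Tetris + p k = p k := by
  rw [hp.map_tetris_self, hp.add_eq_max _ (Nat.sub_le k 1) k le_rfl,
    max_eq_right (Nat.sub_le k 1)]

lemma exists_idempotent_above (hp : IsTetrisChain k p) :
    ∃ V ∈ gammaFIN (k + 1), V.map Tetris = p k ∧ (∀ i ≤ k, V + p i = V) ∧ V + V = V := by
  obtain ⟨V₀, hV₀, hTV₀⟩ := exists_map_tetris_eq (hp.mem_gammaFIN k le_rfl)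
  let C := gammaFIN (k + 1) ∩ {V | V.map Tetris = p k} ∩ {V | ∀ i ≤ k, V + p i = V}
  have hC : IsClosed C := by
    refine ((isClosed_gammaFIN _).inter ?_).inter ?_
    · exact isClosed_eq (continuous_ultrafilter_map Tetris) continuous_const
    · simp only [ofPred_forall]
      exact isClosed_iInter fun i => isClosed_iInter fun _ =>
        isClosed_eq (Ultrafilter.continuous_add_left _) continuous_id
  have hW₀ : V₀ + p k ∈ C := by
    have hpk := hp.mem_gammaFIN k le_rfl
    refine ⟨⟨by simpa using add_mem_gammaFIN hV₀ hpk, ?_⟩, fun i hi => ?_⟩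
    · rw [mem_ofPred_eq, map_tetris_add hpk.1, hTV₀, hp.add_map_tetris_self]
    · rw [add_assoc, hp.add_eq_max k le_rfl i hi, max_eq_left hi]
  have hCadd : ∀ V ∈ C, ∀ V' ∈ C, V + V' ∈ C := by
    rintro V ⟨⟨hV, hTV⟩, hVp⟩ V' ⟨⟨hV', hTV'⟩, hV'p⟩
    refine ⟨⟨by simpa using add_mem_gammaFIN hV hV', ?_⟩,
      fun i hi => by rw [add_assoc, hV'p i hi]⟩
    rw [mem_ofPred_eq, map_tetris_add hV'.1, hTV, hTV', hp.add_eq_max k le_rfl k le_rfl,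
      max_self]
  obtain ⟨V, ⟨⟨hV, hTV⟩, hVp⟩, hVV⟩ := exists_idempotent_in_compact_add_subsemigroup
    Ultrafilter.continuous_add_left C ⟨_, hW₀⟩ hC.isCompact hCadd
  exact ⟨V, hV, hTV, hVp, hVV⟩

lemma exists_succ (hp : IsTetrisChain k p) : ∃ q, IsTetrisChain (k + 1) q := by
  obtain ⟨V, hV, hTV, hVp, hVV⟩ := hp.exists_idempotent_above
  have hpk := hp.mem_gammaFIN k le_rfl
  refine ⟨Function.update p (k + 1) (p k + V), ⟨fun j hj => ?_, fun j hj => ?_, ?_⟩⟩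
  · rcases hj.lt_or_eq with hj | rfl
    · rw [Function.update_of_ne (by omega)]
      exact hp.mem_gammaFIN j (by omega)
    · rw [Function.update_self]
      simpa using add_mem_gammaFIN hpk hV
  · rcases (Nat.lt_succ_iff.mp hj).lt_or_eq with hj | rfl
    · rw [Function.update_of_ne (by omega), Function.update_of_ne (by omega)]
      exact hp.map_tetris j hj
    · rw [Function.update_self, Function.update_of_ne (by omega), map_tetris_add hV.1, hTV,
        hp.map_tetris_self_add]
  · refine add_eq_max_update hp.add_eq_max ?_ (fun i hi => ?_) (fun i hi => ?_)
    · rw [add_assoc, ← add_assoc V, hVp k le_rfl, hVV]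
    · rw [← add_assoc, hp.add_eq_max i hi k le_rfl, max_eq_right hi]
    · rw [add_assoc, hVp i hi]

end IsTetrisChain

lemma exists_isTetrisChain (k : ℕ) : ∃ p, IsTetrisChain k p := by
  induction k with
  | zero =>
    refine ⟨fun _ => pure 0, fun j hj => ?_, fun j hj => absurd hj (Nat.not_lt_zero j),
      fun _ _ _ _ => Ultrafilter.coe_injective (Filter.ext' fun P => ?_)⟩
    · obtain rfl := Nat.le_zero.mp hj
      exact pure_zero_mem_gammaFIN_zero
    · simp [Ultrafilter.eventually_add]
  | succ k ih => exact ih.elim fun p hp => hp.exists_succ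

end Chain

section Prefixes

variable {M : Type*} [AddMonoid M] {p : ℕ → Ultrafilter M} {k j : ℕ} {A : Set M} {g : M}

def prefixes (U : Ultrafilter M) (A : Set M) : Set M :=
  {g | ∀ᶠ h in (U : Filter M), g + h ∈ A}

def fullPrefixes (p : ℕ → Ultrafilter M) (k : ℕ) (A : Set M) : Set M :=
  {g | ∀ j ≤ k, g ∈ prefixes (p j) A}

lemma prefixes_prefixes (U V : Ultrafilter M) (A : Set M) :
    prefixes U (prefixes V A) = prefixes (U + V) A := by
  ext g
  simp only [prefixes, mem_ofPred_eq, Ultrafilter.eventually_add, add_assoc]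

lemma zero_mem_prefixes {U : Ultrafilter M} : 0 ∈ prefixes U A ↔ A ∈ U := by
  simp [prefixes]

lemma fullPrefixes_subset (hp : p 0 = pure 0) : fullPrefixes p k A ⊆ A := fun g hg => by
  simpa [prefixes, hp] using hg 0 (Nat.zero_le k)

lemma eventually_add_mem_prefixes (hp : ∀ a ≤ k, ∀ b ≤ k, p a + p b = p (max a b))
    (hj : j ≤ k) (hg : g ∈ prefixes (p k) A) :
    ∀ᶠ h in (p j : Filter M), g + h ∈ prefixes (p k) A := by
  change g ∈ prefixes (p j) (prefixes (p k) A)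
  rwa [prefixes_prefixes, hp j hj k le_rfl, max_eq_right hj]

lemma eventually_add_mem_fullPrefixes_of_mem_prefixes
    (hp : ∀ a ≤ k, ∀ b ≤ k, p a + p b = p (max a b)) (hg : g ∈ prefixes (p k) A) :
    ∀ᶠ h in (p k : Filter M), g + h ∈ fullPrefixes p k A := by
  refine (eventually_all_finite (finite_le_nat k)).2 fun j hj => ?_
  change g ∈ prefixes (p k) (prefixes (p j) A)
  rwa [prefixes_prefixes, hp k le_rfl j hj, max_eq_left hj]

lemma eventually_add_mem_fullPrefixes (hp : ∀ a ≤ k, ∀ b ≤ k, p a + p b = p (max a b))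
    (hj : j ≤ k) (hg : g ∈ fullPrefixes p k A) :
    ∀ᶠ h in (p j : Filter M), g + h ∈ fullPrefixes p k A := by
  refine (eventually_all_finite (finite_le_nat k)).2 fun i hi => ?_
  change g ∈ prefixes (p j) (prefixes (p i) A)
  rw [prefixes_prefixes, hp j hj i hi]
  exact hg _ (max_le hj hi)

end Prefixes

section BlockSums

def blockSums (F : ℕ → ℕ →₀ ℕ) (n : ℕ) : Set (ℕ →₀ ℕ) :=
  {g | ∃ (s : Finset ℕ) (l : ℕ → ℕ), (∀ i ∈ s, i < n) ∧ g = ∑ i ∈ s, Tetris^[l i] (F i)}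

variable {F G : ℕ → ℕ →₀ ℕ} {n : ℕ}

lemma combSpace_subset_blockSums : CombSpace n F ⊆ blockSums F n :=
  fun _ ⟨s, l, _, hs, _, hg⟩ => ⟨s, l, hs, hg⟩

lemma blockSums_zero : blockSums F 0 = {0} := by
  ext g
  constructor
  · rintro ⟨s, l, hs, rfl⟩
    rw [Finset.eq_empty_of_forall_notMem fun i hi => Nat.not_lt_zero i (hs i hi),
      Finset.sum_empty, mem_singleton_iff]
  · rintro rfl
    exact ⟨∅, id, fun i hi => absurd hi (Finset.notMem_empty i), Finset.sum_empty.symm⟩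

lemma combSpace_zero : CombSpace 0 F = ∅ :=
  eq_empty_of_forall_notMem fun _ ⟨_, _, ⟨i, hi⟩, hs, _⟩ => Nat.not_lt_zero i (hs i hi)

lemma blockSums_congr (h : ∀ i < n, F i = G i) : blockSums F n = blockSums G n := by
  ext g
  constructor <;> rintro ⟨s, l, hs, rfl⟩ <;>
    exact ⟨s, l, hs, Finset.sum_congr rfl fun i hi => by rw [h i (hs i hi)]⟩

lemma combSpace_congr (h : ∀ i < n, F i = G i) : CombSpace n F = CombSpace n G := by
  ext g
  constructor <;> rintro ⟨s, l, hne, hs, hl, rfl⟩ <;>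
    exact ⟨s, l, hne, hs, hl, Finset.sum_congr rfl fun i hi => by rw [h i (hs i hi)]⟩

lemma lt_of_mem_erase_of_lt_succ {s : Finset ℕ} (hs : ∀ i ∈ s, i < n + 1) :
    ∀ i ∈ s.erase n, i < n := fun i hi =>
  lt_of_le_of_ne (Nat.lt_succ_iff.mp (hs i (Finset.mem_of_mem_erase hi)))
    (Finset.ne_of_mem_erase hi)

lemma lt_of_notMem_of_lt_succ {s : Finset ℕ} (hs : ∀ i ∈ s, i < n + 1) (hn : n ∉ s) :
    ∀ i ∈ s, i < n := fun i hi =>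
  lt_of_le_of_ne (Nat.lt_succ_iff.mp (hs i hi)) (ne_of_mem_of_not_mem hi hn)

lemma blockSums_succ_subset :
    blockSums F (n + 1) ⊆ blockSums F n ∪ (blockSums F n + range fun l => Tetris^[l] (F n)) := by
  rintro _ ⟨s, l, hs, rfl⟩
  by_cases hn : n ∈ s
  · exact Or.inr (mem_add.2 ⟨_, ⟨s.erase n, l, lt_of_mem_erase_of_lt_succ hs, rfl⟩, _,
      ⟨l n, rfl⟩, Finset.sum_erase_add s _ hn⟩)
  · exact Or.inl ⟨s, l, lt_of_notMem_of_lt_succ hs hn, rfl⟩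

lemma combSpace_succ_subset :
    CombSpace (n + 1) F ⊆ CombSpace n F ∪ (CombSpace n F + range fun l => Tetris^[l] (F n)) ∪
      (blockSums F n + {F n}) := by
  rintro _ ⟨s, l, hne, hs, ⟨i₀, hi₀, hl₀⟩, rfl⟩
  by_cases hn : n ∈ s
  · have hs' := lt_of_mem_erase_of_lt_succ hs
    rw [← Finset.sum_erase_add s _ hn]
    by_cases hi₀n : i₀ = n
    · subst hi₀n
      exact Or.inr (mem_add.2 ⟨_, ⟨s.erase i₀, l, hs', rfl⟩, _, rfl, by rw [hl₀]; rfl⟩)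
    · have hi₀' : i₀ ∈ s.erase n := Finset.mem_erase.2 ⟨hi₀n, hi₀⟩
      exact Or.inl (Or.inr (mem_add.2
        ⟨_, ⟨s.erase n, l, ⟨i₀, hi₀'⟩, hs', ⟨i₀, hi₀', hl₀⟩, rfl⟩, _, ⟨l n, rfl⟩, rfl⟩))
  · exact Or.inl (Or.inl ⟨s, l, hne, lt_of_notMem_of_lt_succ hs hn, ⟨i₀, hi₀, hl₀⟩, rfl⟩)

lemma blockSums_finite (F : ℕ → ℕ →₀ ℕ) (n : ℕ) : (blockSums F n).Finite := by
  induction n with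
  | zero => exact blockSums_zero ▸ finite_singleton 0
  | succ n ih =>
    exact (ih.union (ih.add (finite_range_tetris_iterate _))).subset blockSums_succ_subset

lemma combSpace_finite (F : ℕ → ℕ →₀ ℕ) (n : ℕ) : (CombSpace n F).Finite :=
  (blockSums_finite F n).subset combSpace_subset_blockSums

end BlockSums

namespace IsTetrisChain

variable {k : ℕ} {p : ℕ → Ultrafilter (ℕ →₀ ℕ)} {A : Set (ℕ →₀ ℕ)}

lemma eventually_forall_tetris_iterate (hp : IsTetrisChain k p) {P : (ℕ →₀ ℕ) → Prop}
    (h : ∀ j ≤ k, ∀ᶠ x in (p j : Filter (ℕ →₀ ℕ)), P x) :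
    ∀ᶠ f in (p k : Filter (ℕ →₀ ℕ)), ∀ l, P (Tetris^[l] f) := by
  have hle : ∀ᶠ f in (p k : Filter (ℕ →₀ ℕ)), ∀ l ≤ k, P (Tetris^[l] f) :=
    (eventually_all_finite (finite_le_nat k)).2 fun l hl => by
      have := h (k - l) (Nat.sub_le k l)
      rwa [← hp.map_tetris_iterate hl] at this
  refine ((hp.mem_gammaFIN k le_rfl).2.and hle).mono fun f hf l => ?_
  rw [← tetris_iterate_min hf.1.1 l]
  exact hf.2 _ (min_le_right l k)

lemma exists_next_block {F : ℕ → ℕ →₀ ℕ} {n : ℕ} (hp : IsTetrisChain k p)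
    (hsums : blockSums F n ⊆ prefixes (p k) A) (hcomb : CombSpace n F ⊆ fullPrefixes p k A) :
    ∃ f, IsFINk k f ∧ (∀ i < n, Blk (F i) f) ∧
      blockSums (Function.update F n f) (n + 1) ⊆ prefixes (p k) A ∧
      CombSpace (n + 1) (Function.update F n f) ⊆ fullPrefixes p k A := by
  have hfin := blockSums_finite F n
  have hblk : ∀ᶠ f in (p k : Filter (ℕ →₀ ℕ)), ∀ i < n, Blk (F i) f :=
    (eventually_all_finite (finite_lt_nat n)).2 fun i _ => (hp.mem_gammaFIN k le_rfl).1 (F i)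
  have hsums' : ∀ᶠ f in (p k : Filter (ℕ →₀ ℕ)),
      ∀ g ∈ blockSums F n, ∀ l, g + Tetris^[l] f ∈ prefixes (p k) A :=
    (eventually_all_finite hfin).2 fun g hg => hp.eventually_forall_tetris_iterate fun j hj =>
      eventually_add_mem_prefixes hp.add_eq_max hj (hsums hg)
  have hsums'' : ∀ᶠ f in (p k : Filter (ℕ →₀ ℕ)),
      ∀ g ∈ blockSums F n, g + f ∈ fullPrefixes p k A :=
    (eventually_all_finite hfin).2 fun g hg =>
      eventually_add_mem_fullPrefixes_of_mem_prefixes hp.add_eq_max (hsums hg)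
  have hcomb' : ∀ᶠ f in (p k : Filter (ℕ →₀ ℕ)),
      ∀ g ∈ CombSpace n F, ∀ l, g + Tetris^[l] f ∈ fullPrefixes p k A :=
    (eventually_all_finite (combSpace_finite F n)).2 fun g hg =>
      hp.eventually_forall_tetris_iterate fun j hj =>
        eventually_add_mem_fullPrefixes hp.add_eq_max hj (hcomb hg)
  obtain ⟨f, hf, hfblk, hf₁, hf₂, hf₃⟩ :=
    ((hp.mem_gammaFIN k le_rfl).2.and (hblk.and (hsums'.and (hsums''.and hcomb')))).exists
  have hF : ∀ i < n, Function.update F n f i = F i := fun i hi =>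
    Function.update_of_ne hi.ne _ _
  refine ⟨f, hf, hfblk, fun g hg => ?_, fun g hg => ?_⟩
  · have := blockSums_succ_subset hg
    rw [blockSums_congr hF, Function.update_self] at this
    rcases this with hg | ⟨g', hg', _, ⟨l, rfl⟩, rfl⟩
    exacts [hsums hg, hf₁ g' hg' l]
  · have := combSpace_succ_subset hg
    rw [blockSums_congr hF, combSpace_congr hF, Function.update_self] at this
    rcases this with (hg | ⟨g', hg', _, ⟨l, rfl⟩, rfl⟩) | ⟨g', hg', _, rfl, rfl⟩
    exacts [hcomb hg, hf₃ g' hg' l, hf₂ g' hg']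

lemma exists_blockSeq (hp : IsTetrisChain k p) (hA : A ∈ p k) (m : ℕ) :
    ∃ F : ℕ → ℕ →₀ ℕ, (∀ i < m, IsFINk k (F i)) ∧ IsBlockSeqFin m F ∧
      blockSums F m ⊆ prefixes (p k) A ∧ CombSpace m F ⊆ fullPrefixes p k A := by
  induction m with
  | zero =>
    refine ⟨0, fun i hi => absurd hi (Nat.not_lt_zero i),
      fun i j _ hj => absurd hj (Nat.not_lt_zero j), ?_, ?_⟩
    · rw [blockSums_zero]
      exact singleton_subset_iff.2 (zero_mem_prefixes.2 hA)
    · rw [combSpace_zero]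
      exact empty_subset _
  | succ n ih =>
    obtain ⟨F, hFIN, hblock, hsums, hcomb⟩ := ih
    obtain ⟨f, hf, hfblk, hsums', hcomb'⟩ := hp.exists_next_block hsums hcomb
    refine ⟨Function.update F n f, fun i hi => ?_, fun i j hij hj => ?_, hsums', hcomb'⟩
    · rcases (Nat.lt_succ_iff.mp hi).lt_or_eq with hi | rfl
      · rw [Function.update_of_ne hi.ne]
        exact hFIN i hi
      · rw [Function.update_self]
        exact hf
    · rw [Function.update_of_ne (hij.trans_le (Nat.lt_succ_iff.mp hj)).ne]
      rcases (Nat.lt_succ_iff.mp hj).lt_or_eq with hj | rfl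
      · rw [Function.update_of_ne hj.ne]
        exact hblock i j hij hj
      · rw [Function.update_self]
        exact hfblk i hij

end IsTetrisChain

theorem exists_blockSeq_combSpace_monochromatic {α : Type*} [Finite α] (k m : ℕ)
    (c : (ℕ →₀ ℕ) → α) :
    ∃ F : ℕ → ℕ →₀ ℕ, (∀ i < m, IsFINk k (F i)) ∧ IsBlockSeqFin m F ∧
      ∃ a, ∀ g ∈ CombSpace m F, c g = a := by
  obtain ⟨p, hp⟩ := exists_isTetrisChain k
  obtain ⟨a, hA⟩ := (p k).exists_eventually_eq c
  obtain ⟨F, hFIN, hblock, -, hcomb⟩ := hp.exists_blockSeq hA m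
  exact ⟨F, hFIN, hblock, a, fun g hg => fullPrefixes_subset hp.zero (hcomb hg)⟩

theorem finite_FINk_theorem_general (m k r : ℕ) :
    ∃ n : ℕ, ∀ c : (ℕ →₀ ℕ) → Fin r,
      ∃ F : ℕ → (ℕ →₀ ℕ),
        (∀ i < m, F i ∈ FINkN k n) ∧ IsBlockSeqFin m F ∧
        ∀ g ∈ CombSpace m F, ∀ h ∈ CombSpace m F, c g = c h := by
  by_contra! hbad
  choose c hc using hbad
  choose cLim hcLim using fun g => (hyperfilter ℕ).exists_eventually_eq (c · g)
  obtain ⟨F, hFIN, hblock, a, hmono⟩ := exists_blockSeq_combSpace_monochromatic k m cLim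
  have hsupp : ∀ᶠ n in (hyperfilter ℕ : Filter ℕ), ∀ i < m, ∀ x ∈ (F i).support, x < n :=
    (eventually_all_finite (finite_lt_nat m)).2 fun i _ =>
      Nat.hyperfilter_le_atTop (eventually_support_lt (F i))
  have hagree : ∀ᶠ n in (hyperfilter ℕ : Filter ℕ), ∀ g ∈ CombSpace m F, c n g = cLim g :=
    (eventually_all_finite (combSpace_finite F m)).2 fun g _ => hcLim g
  obtain ⟨n, hn, hcn⟩ := (hsupp.and hagree).exists
  obtain ⟨g, hg, h, hh, hne⟩ := hc n F (fun i hi => ⟨hFIN i hi, hn i hi⟩) hblock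
  exact hne (by rw [hcn g hg, hcn h hh, hmono g hg, hmono h hh])

/-- **Finite `FIN_k` theorem.** For all `m`, `k ≥ 1`, `r ≥ 1` there is `n` such that every
`r`-coloring of `FIN_k(n)` admits a block sequence of length `m` in `FIN_k(n)` on whose
combinatorial space the coloring is constant. -/
theorem finite_FINk_theorem (m k r : ℕ) (hk : 1 ≤ k) (hr : 1 ≤ r) :
    ∃ n : ℕ, ∀ c : (ℕ →₀ ℕ) → Fin r,
      ∃ F : ℕ → (ℕ →₀ ℕ),
        (∀ i < m, F i ∈ FINkN k n) ∧ IsBlockSeqFin m F ∧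
        ∀ g ∈ CombSpace m F, ∀ h ∈ CombSpace m F, c g = c h :=
  finite_FINk_theorem_general m k r
end

section
/- (Folkman's Theorem, finite unions form) For all natural numbers m and r ≥ 1 there exists a natural number N such that for every coloring c of the nonempty subsets of {0,…,N−1} with r colors there exists a block sequence x_0 < x_1 < … < x_{m−1} of nonempty subsets of {0,…,N−1} such that c is constant on the set of all unions ⋃_{i∈s} x_i over nonempty s ⊆ {0,…,m−1}. -/
/-- The block relation on finite sets: `max x < min y`. -/
def BlkS (x y : Finset ℕ) : Prop :=
  ∀ i ∈ x, ∀ j ∈ y, i < j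

/-- `(X i)_{i<m}` is a block sequence of nonempty finite sets. -/
def IsBlockSeqS (m : ℕ) (X : ℕ → Finset ℕ) : Prop :=
  ∀ i j : ℕ, i < j → j < m → BlkS (X i) (X j)

/-- `(G i)_{i<d}` is a block sequence (a `d`-tuple version). -/
def IsBlockTupleS (d : ℕ) (G : Fin d → Finset ℕ) : Prop :=
  ∀ i j : Fin d, i < j → BlkS (G i) (G j)

/-- The combinatorial space `⟨X i⟩_{i<m}`: all unions `⋃_{i ∈ s} X i` with `∅ ≠ s ⊆ {0,…,m-1}`. -/
def CombSpaceS (m : ℕ) (X : ℕ → Finset ℕ) : Set (Finset ℕ) :=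
  {z | ∃ s : Finset ℕ, s.Nonempty ∧ (∀ i ∈ s, i < m) ∧ z = s.biUnion X}

/-!
Colour a natural number `n` by the colour of its binary support. Hindman's theorem gives a
sequence `b` of positive integers all of whose finite sums have the same colour. Grouping the
`b l` into consecutive intervals `I j` whose sums are divisible by a power of two exceeding all
earlier sums (pigeonhole on prefix sums) makes the binary supports `x j` of these sums a block
sequence; the binary support of a sum over `⋃_{j ∈ s} I j` is then `⋃_{j ∈ s} x j`, so all
finite unions of the `x j` have one colour. The finite statement follows by compactness: a
limit, along an ultrafilter, of counterexample colourings of larger and larger `{0,…,N-1}`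
would contradict this infinite version.
-/

open Finset Filter Function

lemma BlkS.disjoint {x y : Finset ℕ} (h : BlkS x y) : Disjoint x y :=
  disjoint_left.2 fun a hx hy => lt_irrefl a (h a hx a hy)

lemma pairwise_disjoint_of_blkS {X : ℕ → Finset ℕ} (hX : ∀ i j, i < j → BlkS (X i) (X j)) :
    Pairwise (Disjoint on X) :=
  (pairwise_disjoint_on X).2 fun i j h => (hX i j h).disjoint

namespace Nat

lemma bitIndices_toFinset_nonempty {n : ℕ} (hn : 0 < n) : n.bitIndices.toFinset.Nonempty := by
  rw [nonempty_iff_ne_empty]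
  intro h
  have := sum_toFinset_bitIndices_two_pow n
  rw [h, sum_empty] at this
  omega

lemma lt_of_mem_bitIndices_of_lt_two_pow {n K a : ℕ} (hn : n < 2 ^ K) (ha : a ∈ n.bitIndices) :
    a < K :=
  (Nat.pow_lt_pow_iff_right one_lt_two).1 ((two_pow_le_of_mem_bitIndices ha).trans_lt hn)

lemma le_of_mem_bitIndices_of_two_pow_dvd {n K a : ℕ} (hn : 2 ^ K ∣ n) (ha : a ∈ n.bitIndices) :
    K ≤ a := by
  obtain ⟨n, rfl⟩ := hn
  obtain ⟨a, -, rfl⟩ := List.mem_map.1 ((bitIndices_two_pow_mul K n) ▸ ha)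
  omega

lemma blkS_bitIndices_of_lt_of_dvd {m n K : ℕ} (hm : m < 2 ^ K) (hn : 2 ^ K ∣ n) :
    BlkS m.bitIndices.toFinset n.bitIndices.toFinset := fun _ ha _ hb =>
  (lt_of_mem_bitIndices_of_lt_two_pow hm (List.mem_toFinset.1 ha)).trans_le
    (le_of_mem_bitIndices_of_two_pow_dvd hn (List.mem_toFinset.1 hb))

lemma bitIndices_toFinset_sum {s : Finset ℕ} {u : ℕ → ℕ}
    (hu : (s : Set ℕ).PairwiseDisjoint fun i => (u i).bitIndices.toFinset) :
    (∑ i ∈ s, u i).bitIndices.toFinset = s.biUnion fun i => (u i).bitIndices.toFinset := by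
  conv_lhs => rw [← sum_congr rfl fun i _ => sum_toFinset_bitIndices_two_pow (u i), ← sum_biUnion hu]
  exact toFinset_bitIndices_sum_two_pow _

end Nat

lemma exists_Ico_dvd_sum (b : ℕ → ℕ) (t : ℕ) {d : ℕ} (hd : 0 < d) :
    ∃ p q, t ≤ p ∧ p < q ∧ d ∣ ∑ l ∈ Ico p q, b l := by
  obtain ⟨i, j, hij, hmod⟩ := (Set.finite_lt_nat d).exists_lt_map_eq_of_forall_mem
    (f := fun i => (∑ l ∈ range (t + i), b l) % d) fun i => Nat.mod_lt _ hd
  refine ⟨t + i, t + j, by omega, by omega, (Nat.modEq_zero_iff_dvd).1 ?_⟩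
  refine Nat.ModEq.add_left_cancel' (∑ l ∈ range (t + i), b l) ?_
  rw [add_zero, sum_range_add_sum_Ico _ (by omega)]
  exact hmod.symm

lemma exists_blocks_with_binary_block_sums (b : ℕ → ℕ) :
    ∃ I : ℕ → Finset ℕ, (∀ j, (I j).Nonempty) ∧ (∀ i j, i < j → BlkS (I i) (I j)) ∧
      ∀ i j, i < j →
        BlkS (∑ l ∈ I i, b l).bitIndices.toFinset (∑ l ∈ I j, b l).bitIndices.toFinset := by
  choose p q hpq using fun t => exists_Ico_dvd_sum b t (d := 2 ^ ∑ l ∈ range t, b l) (by positivity)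
  set T : ℕ → ℕ := fun j => q^[j] 0
  have hT : ∀ j, T (j + 1) = q (T j) := fun j => Function.iterate_succ_apply' q j 0
  have hT_mono : StrictMono T := strictMono_nat_of_lt_succ fun j => by
    rw [hT]; linarith [hpq (T j)]
  have hq_le : ∀ i j, i < j → q (T i) ≤ T j := fun i j h => hT i ▸ hT_mono.monotone h
  refine ⟨fun j => Ico (p (T j)) (q (T j)), fun j => nonempty_Ico.2 (hpq _).2.1, ?_, ?_⟩
  · intro i j h x hx y hy
    rw [mem_Ico] at hx hy
    linarith [hq_le i j h, (hpq (T j)).1]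
  · intro i j h
    refine Nat.blkS_bitIndices_of_lt_of_dvd ?_ (hpq (T j)).2.2
    calc ∑ l ∈ Ico (p (T i)) (q (T i)), b l
        ≤ ∑ l ∈ range (T j), b l :=
          sum_le_sum_of_subset fun l hl => mem_range.2 ((mem_Ico.1 hl).2.trans_le (hq_le i j h))
      _ < 2 ^ ∑ l ∈ range (T j), b l := Nat.lt_two_pow_self

lemma pos_of_mem_FS {a : Stream' ℕ} (ha : ∀ i, 0 < a.get i) {n : ℕ} (hn : n ∈ Hindman.FS a) :
    0 < n := by
  induction hn with
  | head' a => exact ha 0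
  | tail' a n _ ih => exact ih fun i => ha (i + 1)
  | cons' a n _ _ => exact Nat.add_pos_left (ha 0) n

theorem exists_pos_seq_monochromatic_finset_sums {κ : Type*} [Finite κ] (c : ℕ → κ) :
    ∃ b : ℕ → ℕ, (∀ i, 0 < b i) ∧ ∃ k, ∀ s : Finset ℕ, s.Nonempty → c (∑ i ∈ s, b i) = k := by
  obtain ⟨_, ⟨k, rfl⟩, b, hb⟩ := Hindman.FS_partition_regular (fun _ => 1 : Stream' ℕ)
    (Set.range fun k => {n | 0 < n ∧ c n = k}) (Set.finite_range _)
    fun n hn => Set.mem_sUnion.2 ⟨_, ⟨c n, rfl⟩, pos_of_mem_FS (fun _ => one_pos) hn, rfl⟩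
  exact ⟨b.get, fun i => (hb (Hindman.FS.singleton b i)).1, k,
    fun s hs => (hb (Hindman.FS.finsetSum b s hs)).2⟩

theorem exists_blockSeq_monochromatic_unions {κ : Type*} [Finite κ] (c : Finset ℕ → κ) :
    ∃ X : ℕ → Finset ℕ, (∀ i, (X i).Nonempty) ∧ (∀ i j, i < j → BlkS (X i) (X j)) ∧
      ∃ k, ∀ s : Finset ℕ, s.Nonempty → c (s.biUnion X) = k := by
  obtain ⟨b, hb, k, hk⟩ := exists_pos_seq_monochromatic_finset_sums fun n => c n.bitIndices.toFinset
  obtain ⟨I, hI_ne, hI_blk, hX_blk⟩ := exists_blocks_with_binary_block_sums b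
  refine ⟨fun j => (∑ l ∈ I j, b l).bitIndices.toFinset,
    fun j => Nat.bitIndices_toFinset_nonempty (sum_pos (fun l _ => hb l) (hI_ne j)), hX_blk, k,
    fun s hs => ?_⟩
  rw [← Nat.bitIndices_toFinset_sum ((pairwise_disjoint_of_blkS hX_blk).set_pairwise _),
    ← sum_biUnion ((pairwise_disjoint_of_blkS hI_blk).set_pairwise _)]
  exact hk _ (hs.biUnion fun j _ => hI_ne j)

lemma exists_limit_coloring {α κ : Type*} [Finite κ] (c : ℕ → α → κ) :
    ∃ c' : α → κ, ∀ (Z : Finset α) (B : ℕ), ∃ N, B ≤ N ∧ ∀ z ∈ Z, c N z = c' z := by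
  have h_lim : ∀ z, ∃ k, ∀ᶠ N in hyperfilter ℕ, c N z = k := fun z => by
    obtain ⟨k, hk⟩ := ((hyperfilter ℕ).map (c · z)).eq_pure_of_finite
    exact ⟨k, Ultrafilter.mem_map.1 (hk ▸ Ultrafilter.mem_pure.2 rfl : {k} ∈ _)⟩
  choose c' hc' using h_lim
  refine ⟨c', fun Z B => ?_⟩
  have hB : ∀ᶠ N in hyperfilter ℕ, B ≤ N :=
    hyperfilter_le_cofinite (Nat.cofinite_eq_atTop ▸ eventually_ge_atTop B)
  exact (hB.and ((eventually_all_finset Z).2 fun z _ => hc' z)).exists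

theorem folkman_finite_unions_general (m r : ℕ) :
    ∃ N : ℕ, ∀ c : Finset ℕ → Fin r,
      ∃ X : ℕ → Finset ℕ,
        (∀ i < m, (X i).Nonempty ∧ ∀ a ∈ X i, a < N) ∧ IsBlockSeqS m X ∧
        ∀ x ∈ CombSpaceS m X, ∀ y ∈ CombSpaceS m X, c x = c y := by
  classical
  by_contra! h_counter
  choose c h_bad using h_counter
  obtain ⟨c_lim, hc_lim⟩ := exists_limit_coloring c
  obtain ⟨X, hX_ne, hX_blk, k, hk⟩ := exists_blockSeq_monochromatic_unions c_lim
  obtain ⟨B, hB⟩ := ((range m).biUnion X).exists_nat_subset_range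
  obtain ⟨N, hBN, hN⟩ := hc_lim ((range m).powerset.image (·.biUnion X)) B
  have h_mono : ∀ x ∈ CombSpaceS m X, c N x = k := by
    rintro _ ⟨s, hs, hsm, rfl⟩
    rw [hN _ (mem_image.2 ⟨s, mem_powerset.2 fun i hi => mem_range.2 (hsm i hi), rfl⟩), hk s hs]
  obtain ⟨x, hx, y, hy, hxy⟩ := h_bad N X
    (fun i hi => ⟨hX_ne i, fun a ha =>
      (mem_range.1 (hB (mem_biUnion.2 ⟨i, mem_range.2 hi, ha⟩))).trans_le hBN⟩)
    fun i j h _ => hX_blk i j h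
  exact hxy ((h_mono x hx).trans (h_mono y hy).symm)

/-- **Folkman's theorem (finite unions form).** For all `m` and `r ≥ 1` there is `N` such that
for every `r`-coloring of the nonempty subsets of `{0,…,N-1}` there is a block sequence
`x_0 < … < x_{m-1}` of nonempty subsets of `{0,…,N-1}` such that the coloring is constant on
all unions `⋃_{i ∈ s} x_i`, `∅ ≠ s ⊆ {0,…,m-1}`. -/
theorem folkman_finite_unions (m r : ℕ) (hr : 1 ≤ r) :
    ∃ N : ℕ, ∀ c : Finset ℕ → Fin r,
      ∃ X : ℕ → Finset ℕ,
        (∀ i < m, (X i).Nonempty ∧ ∀ a ∈ X i, a < N) ∧ IsBlockSeqS m X ∧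
        ∀ x ∈ CombSpaceS m X, ∀ y ∈ CombSpaceS m X, c x = c y :=
  folkman_finite_unions_general m r
end

section
/- For every natural number m ≥ 1, setting N = f_4(6m − 3) (where (f_i) is the Ackermann hierarchy), for every coloring c of the nonempty subsets of {0,…,N−1} with 2 colors there exists a block sequence x_0 < … < x_{m−1} of nonempty subsets of {0,…,N−1} such that c is constant on the combinatorial space ⟨x_i⟩_{i<m}. -/
/-- The Ackermann hierarchy: `f₁ x = 2 x` and `f_{i+1} x = f_i^{(x)} 1`. -/
def fAck : ℕ → ℕ → ℕ
  | 0, x => x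
  | 1, x => 2 * x
  | n + 2, x => (fAck (n + 1))^[x] 1

/-!
Put `K := maxFamilyBound 2 (2m - 1)` and color each `K`-set by the colors of its `K` initial
segments. Ramsey's theorem, proved through end-homogeneous sets, gives `2K` points on whose
`K`-sets this coloring is constant; padding a subset of the lower `K` points with upper points
turns it into an initial segment, so on the lower `K` points `c` depends only on cardinality.
It then suffices to find sizes `u₀, …, u_{m-1}` with `∑ uⱼ ≤ K` all of whose nonempty subset sums
get the same color, and to realise them by consecutive blocks. These sizes are the cardinalities
of `2m - 1` disjoint sets on which the color of a union depends only on its largest index (built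
by iterating a pigeonhole on the color patterns of intervals), restricted by pigeonhole to `m`
indices carrying the same color. All bounds are towers of exponentials, dominated by `f₄`.
-/

lemma fAck_two (x : ℕ) : fAck 2 x = 2 ^ x := by
  change (fAck 1)^[x] 1 = 2 ^ x
  induction x with
  | zero => rfl
  | succ n ih =>
    rw [Function.iterate_succ_apply', ih, pow_succ, mul_comm]
    rfl

lemma fAck_three_succ (x : ℕ) : fAck 3 (x + 1) = 2 ^ fAck 3 x := by
  rw [← fAck_two]
  exact Function.iterate_succ_apply' (fAck 2) x 1

lemma fAck_three_strictMono : StrictMono (fAck 3) :=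
  strictMono_nat_of_lt_succ fun x => by rw [fAck_three_succ]; exact Nat.lt_two_pow_self

lemma lt_fAck_three (x : ℕ) : x < fAck 3 x := by
  induction x with
  | zero => exact Nat.one_pos
  | succ n ih => exact (Nat.succ_le_of_lt ih).trans_lt (fAck_three_strictMono (Nat.lt_succ_self n))

lemma two_pow_le_fAck_three : ∀ x : ℕ, 2 ^ x ≤ fAck 3 x
  | 0 => le_rfl
  | x + 1 => by
    rw [fAck_three_succ]
    exact Nat.pow_le_pow_right two_pos (lt_fAck_three x)

lemma three_mul_add_one_le_two_pow {x : ℕ} (hx : 4 ≤ x) : 3 * x + 1 ≤ 2 ^ x := by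
  induction x, hx using Nat.le_induction with
  | base => norm_num
  | succ n _ ih => rw [pow_succ]; omega

lemma three_mul_add_one_le_fAck_three {x : ℕ} (hx : 4 ≤ x) : 3 * x + 1 ≤ fAck 3 x :=
  (three_mul_add_one_le_two_pow hx).trans (two_pow_le_fAck_three x)

lemma iterate_two_pow_fAck_three (j y : ℕ) : (2 ^ ·)^[j] (fAck 3 y) = fAck 3 (y + j) := by
  induction j with
  | zero => rfl
  | succ n ih => rw [Function.iterate_succ_apply', ih, ← fAck_three_succ]; rfl

lemma monotone_iterate_fAck_three : Monotone fun n => (fAck 3)^[n] 1 :=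
  fAck_three_strictMono.monotone.monotone_iterate_of_le_map (lt_fAck_three 1).le

namespace Folkman

open Finset Fintype

variable {G : Type*}

lemma disjoint_of_subset_range {X Y : Finset ℕ} {n : ℕ} (hX : X ⊆ range n)
    (hY : ∀ y ∈ Y, n ≤ y) : Disjoint X Y :=
  disjoint_left.2 fun x hx hxY => (mem_range.1 (hX hx)).not_ge (hY x hxY)

lemma biUnion_update_of_notMem {ι α : Type*} [DecidableEq ι] [DecidableEq α] {s : Finset ι}
    {i : ι} (hi : i ∉ s) (W : ι → Finset α) (V : Finset α) :
    s.biUnion (Function.update W i V) = s.biUnion W :=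
  biUnion_congr rfl fun _ hj => Function.update_of_ne (ne_of_mem_of_not_mem hj hi) _ _

lemma biUnion_update_of_mem {ι α : Type*} [DecidableEq ι] [DecidableEq α] {s : Finset ι}
    {i : ι} (hi : i ∈ s) (W : ι → Finset α) (V : Finset α) :
    s.biUnion (Function.update W i V) = V ∪ (s.erase i).biUnion W := by
  rw [← insert_erase hi, biUnion_insert, Function.update_self, erase_insert (notMem_erase i s),
    biUnion_update_of_notMem (notMem_erase i s)]

lemma erase_subset_range_of_subset_range_add_one {s : Finset ℕ} {d : ℕ}
    (hs : s ⊆ range (d + 1)) : s.erase d ⊆ range d :=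
  subset_insert_iff.1 (range_add_one ▸ hs)

lemma pairwiseDisjoint_update_range_add_one {α : Type*} [DecidableEq α] {d : ℕ}
    {W : ℕ → Finset α} {V : Finset α} (hW : (range d : Set ℕ).PairwiseDisjoint W)
    (hV : ∀ t < d, Disjoint (W t) V) :
    (range (d + 1) : Set ℕ).PairwiseDisjoint (Function.update W d V) := by
  intro a ha b hb hab
  simp only [coe_range, Set.mem_Iio] at ha hb
  simp only [Function.onFun, Function.update_apply]
  split_ifs with had hbd hbd
  · exact absurd (had.trans hbd.symm) hab
  · exact (hV b (by omega)).symm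
  · exact hV a (by omega)
  · exact hW (by simp; omega) (by simp; omega) hab

lemma exists_injOn_mapsTo_of_card_le {α β : Type*} [DecidableEq α] [Nonempty β]
    {s : Finset α} {t : Finset β} (h : #s ≤ #t) :
    ∃ g : α → β, Set.InjOn g s ∧ Set.MapsTo g s t := by
  obtain ⟨f⟩ := Function.Embedding.nonempty_of_card_le (α := s) (β := t) (by simpa using h)
  refine ⟨fun a => if ha : a ∈ s then f ⟨a, ha⟩ else Classical.arbitrary β,
    fun a ha b hb hab => ?_, fun a ha => ?_⟩
  · rw [mem_coe] at ha hb
    simp only [dif_pos ha, dif_pos hb] at hab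
    exact congrArg Subtype.val (f.injective (Subtype.ext hab))
  · rw [mem_coe] at ha
    simp only [dif_pos ha, mem_coe, coe_mem]

lemma exists_subsets_card_eq_lt {α : Type*} [LinearOrder α] (H : Finset α) {a b : ℕ}
    (h : #H = a + b) :
    ∃ Y ⊆ H, ∃ Z ⊆ H, #Y = a ∧ #Z = b ∧ ∀ y ∈ Y, ∀ z ∈ Z, y < z := by
  induction b generalizing H with
  | zero => exact ⟨H, subset_rfl, ∅, empty_subset _, h, rfl, by simp⟩
  | succ b ih =>
    have hne : H.Nonempty := card_pos.1 (by omega)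
    have hmax := H.max'_mem hne
    obtain ⟨Y, hY, Z, hZ, hYa, hZb, hYZ⟩ :=
      ih (H.erase (H.max' hne)) (by rw [card_erase_of_mem hmax]; omega)
    refine ⟨Y, hY.trans (erase_subset _ _), insert (H.max' hne) Z,
      insert_subset hmax (hZ.trans (erase_subset _ _)), hYa, ?_, fun y hy z hz => ?_⟩
    · rw [card_insert_of_notMem fun h => notMem_erase _ _ (hZ h), hZb]
    · rcases mem_insert.1 hz with rfl | hz
      · exact (H.le_max' y (mem_of_mem_erase (hY hy))).lt_of_ne (ne_of_mem_erase (hY hy))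
      · exact hYZ y hy z hz

-- `r ^ 2 ^ n` counts the `r`-color patterns on the subsets of `range n`.
def stableFamilyBound (r : ℕ) : ℕ → ℕ
  | 0 => 0
  | d + 1 => stableFamilyBound r d + r ^ 2 ^ stableFamilyBound r d + 1

lemma exists_lt_color_union_Ico_eq [Fintype G] (χ : Finset ℕ → G) (n : ℕ) :
    ∃ i j, i < j ∧ j ≤ card G ^ 2 ^ n ∧
      ∀ q ⊆ range n, χ (q ∪ Ico n (n + i)) = χ (q ∪ Ico n (n + j)) := by
  let f : Fin (card G ^ 2 ^ n + 1) → (range n).powerset → G :=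
    fun t q => χ (q ∪ Ico n (n + t))
  obtain ⟨x, y, hxy, hf⟩ := Fintype.exists_ne_map_eq_of_card_lt f (by simp)
  have key (x y : Fin (card G ^ 2 ^ n + 1)) (hf : f x = f y) (q) (hq : q ⊆ range n) :
      χ (q ∪ Ico n (n + x)) = χ (q ∪ Ico n (n + y)) :=
    congrFun hf ⟨q, mem_powerset.2 hq⟩
  rcases Fin.lt_or_lt_of_ne hxy with h | h
  · exact ⟨x, y, h, Nat.lt_succ_iff.1 y.2, key x y hf⟩
  · exact ⟨y, x, h, Nat.lt_succ_iff.1 x.2, key y x hf.symm⟩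

lemma exists_stable_family [Fintype G] (χ : Finset ℕ → G) (d : ℕ) :
    ∃ (F : Finset ℕ) (W : ℕ → Finset ℕ), F ⊆ range (stableFamilyBound (card G) d) ∧
      (∀ t < d, (W t).Nonempty ∧ W t ⊆ range (stableFamilyBound (card G) d) ∧
        Disjoint F (W t)) ∧
      (range d : Set ℕ).PairwiseDisjoint W ∧
      ∀ s ⊆ range d, χ (F ∪ s.biUnion W) = χ F := by
  induction d generalizing χ with
  | zero =>
    exact ⟨∅, fun _ => ∅, by simp, by simp, by simp, fun s hs => by simp [subset_empty.1 hs]⟩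
  | succ d ih =>
    set n := stableFamilyBound (card G) d
    obtain ⟨i, j, hij, hjR, hχ⟩ := exists_lt_color_union_Ico_eq χ n
    obtain ⟨F, W, hF, hW, hdisj, hstable⟩ := ih fun q => χ (q ∪ Ico n (n + i))
    have hn : n + j < stableFamilyBound (card G) (d + 1) := by
      simp only [stableFamilyBound, n] at hjR ⊢; omega
    have hrange : range n ⊆ range (stableFamilyBound (card G) (d + 1)) :=
      range_subset_range.2 (by omega)
    have hlow : ∀ V ⊆ range n,
        Disjoint V (Ico n (n + i)) ∧ Disjoint V (Ico (n + i) (n + j)) :=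
      fun V hV => ⟨disjoint_of_subset_range hV fun y hy => (mem_Ico.1 hy).1,
        disjoint_of_subset_range hV fun y hy => le_of_add_le_left (mem_Ico.1 hy).1⟩
    refine ⟨F ∪ Ico n (n + i), Function.update W d (Ico (n + i) (n + j)), ?_, ?_, ?_, ?_⟩
    · refine union_subset (hF.trans hrange) fun x hx => mem_range.2 ?_
      have := mem_Ico.1 hx; omega
    · intro t ht
      rcases Nat.lt_succ_iff_lt_or_eq.1 ht with ht | rfl
      · obtain ⟨hne, hsub, hFW⟩ := hW t ht
        rw [Function.update_of_ne ht.ne]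
        exact ⟨hne, hsub.trans hrange, disjoint_union_left.2 ⟨hFW, (hlow _ hsub).1.symm⟩⟩
      · rw [Function.update_self]
        refine ⟨nonempty_Ico.2 (by omega), fun x hx => mem_range.2 ?_,
          disjoint_union_left.2 ⟨(hlow F hF).2, Ico_disjoint_Ico_consecutive _ _ _⟩⟩
        have := mem_Ico.1 hx; omega
    · exact pairwiseDisjoint_update_range_add_one hdisj fun t ht => (hlow _ (hW t ht).2.1).2
    · intro s hs
      have hs' := erase_subset_range_of_subset_range_add_one hs
      by_cases hd : d ∈ s
      · have hq : F ∪ (s.erase d).biUnion W ⊆ range n :=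
          union_subset hF (biUnion_subset.2 fun t ht => (hW t (mem_range.1 (hs' ht))).2.1)
        rw [biUnion_update_of_mem hd, ← hstable _ hs', hχ _ hq,
          ← Ico_union_Ico_eq_Ico (Nat.le_add_right n i) (show n + i ≤ n + j by omega)]
        ac_rfl
      · rw [biUnion_update_of_notMem hd, union_right_comm,
          hstable s (erase_eq_of_notMem hd ▸ hs')]

def maxFamilyBound (r : ℕ) : ℕ → ℕ
  | 0 => 0
  | L + 1 => stableFamilyBound r (maxFamilyBound r L) + 1

lemma exists_family_color_eq_max [Fintype G] (χ : Finset ℕ → G) (L : ℕ) :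
    ∃ (B : ℕ → Finset ℕ) (v : ℕ → G),
      (∀ i < L, (B i).Nonempty ∧ B i ⊆ range (maxFamilyBound (card G) L)) ∧
      (range L : Set ℕ).PairwiseDisjoint B ∧
      ∀ s ⊆ range L, ∀ hs : s.Nonempty, χ (s.biUnion B) = v (s.max' hs) := by
  induction L generalizing χ with
  | zero =>
    exact ⟨fun _ => ∅, fun _ => χ ∅, by simp, by simp,
      fun s hs hne => absurd (subset_empty.1 hs) hne.ne_empty⟩
  | succ L ih =>
    set d := maxFamilyBound (card G) L
    set n := stableFamilyBound (card G) d
    obtain ⟨F, W, hF, hW, hWdisj, hstable⟩ := exists_stable_family (fun q => χ (insert n q)) d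
    obtain ⟨B, v, hB, hBdisj, hcol⟩ := ih fun s => χ (s.biUnion W)
    have hBW (i) (hi : i < L) : (B i).biUnion W ⊆ range n :=
      biUnion_subset.2 fun t ht => (hW t (mem_range.1 ((hB i hi).2 ht))).2.1
    have hbound : maxFamilyBound (card G) (L + 1) = n + 1 := rfl
    -- The new last block `insert n F` absorbs, by stability, any union of earlier blocks.
    refine ⟨Function.update (fun i => (B i).biUnion W) L (insert n F),
      Function.update v L (χ (insert n F)), fun i hi => ?_, ?_, fun s hs hne => ?_⟩
    · rw [hbound, range_add_one]
      rcases Nat.lt_succ_iff_lt_or_eq.1 hi with hi | rfl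
      · obtain ⟨⟨a, ha⟩, hsub⟩ := hB i hi
        obtain ⟨x, hx⟩ := (hW a (mem_range.1 (hsub ha))).1
        rw [Function.update_of_ne hi.ne]
        exact ⟨⟨x, mem_biUnion.2 ⟨a, ha, hx⟩⟩, (hBW i hi).trans (subset_insert _ _)⟩
      · rw [Function.update_self]
        exact ⟨insert_nonempty _ _, insert_subset_insert _ hF⟩
    · have hFB (b) (hb : b < L) : Disjoint ((B b).biUnion W) (insert n F) :=
        (disjoint_insert_left.2 ⟨fun h => notMem_range_self (hBW b hb h),
          (disjoint_biUnion_right _ _ _).2 fun t ht =>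
            (hW t (mem_range.1 ((hB b hb).2 ht))).2.2⟩).symm
      refine pairwiseDisjoint_update_range_add_one (fun a ha b hb hab => ?_) hFB
      refine (disjoint_biUnion_left _ _ _).2 fun t ht =>
        (disjoint_biUnion_right _ _ _).2 fun t' ht' => ?_
      exact hWdisj ((hB a (mem_range.1 ha)).2 ht) ((hB b (mem_range.1 hb)).2 ht')
        fun h => disjoint_left.1 (hBdisj ha hb hab) ht (h ▸ ht')
    · by_cases hL : L ∈ s
      · have hmax : s.max' hne = L :=
          le_antisymm (Nat.lt_succ_iff.1 (mem_range.1 (hs (s.max'_mem hne)))) (s.le_max' L hL)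
        have hs' := erase_subset_range_of_subset_range_add_one hs
        have hsub : (s.erase L).biUnion B ⊆ range d :=
          biUnion_subset.2 fun i hi => (hB i (mem_range.1 (hs' hi))).2
        rw [biUnion_update_of_mem hL, hmax, Function.update_self, insert_union, ← biUnion_biUnion]
        exact hstable _ hsub
      · have hsL : s ⊆ range L :=
          erase_eq_of_notMem hL ▸ erase_subset_range_of_subset_range_add_one hs
        rw [biUnion_update_of_notMem hL,
          Function.update_of_ne (ne_of_mem_of_not_mem (s.max'_mem hne) hL), ← biUnion_biUnion]
        exact hcol s hsL hne

theorem exists_subset_sum_color_eq [Fintype G] (γ : ℕ → G) {m L : ℕ}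
    (hL : card G * (m - 1) < L) :
    ∃ (u : ℕ → ℕ) (w : G), (∀ j < m, 0 < u j) ∧
      ∑ j ∈ range m, u j ≤ maxFamilyBound (card G) L ∧
      ∀ s ⊆ range m, s.Nonempty → γ (∑ j ∈ s, u j) = w := by
  classical
  obtain ⟨B, v, hB, hBdisj, hcol⟩ := exists_family_color_eq_max (fun S => γ #S) L
  obtain ⟨w, -, hw⟩ := exists_lt_card_fiber_of_mul_lt_card_of_maps_to (s := range L)
    (fun i _ => mem_univ (v i)) (by simpa using hL)
  obtain ⟨J, hJ, hJm⟩ := exists_subset_card_eq (show m ≤ #{i ∈ range L | v i = w} by omega)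
  obtain ⟨g, hg, hgJ⟩ := exists_injOn_mapsTo_of_card_le (s := range m) (t := J) (by simp [hJm])
  have hgL (j) (hj : j ∈ range m) : g j ∈ range L ∧ v (g j) = w := mem_filter.1 (hJ (hgJ hj))
  have himage {s} (hs : s ⊆ range m) : s.image g ⊆ range L := fun i hi => by
    obtain ⟨j, hj, rfl⟩ := mem_image.1 hi
    exact (hgL j (hs hj)).1
  have hcard {s} (hs : s ⊆ range m) : #((s.image g).biUnion B) = ∑ j ∈ s, #(B (g j)) := by
    rw [card_biUnion (hBdisj.subset (coe_subset.2 (himage hs))),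
      sum_image (hg.mono (coe_subset.2 hs))]
  refine ⟨fun j => #(B (g j)), w,
    fun j hj => card_pos.2 (hB _ (mem_range.1 (hgL j (mem_range.2 hj)).1)).1, ?_,
    fun s hs hne => ?_⟩
  · rw [← hcard subset_rfl, ← card_range (maxFamilyBound (card G) L)]
    exact card_le_card (biUnion_subset.2 fun i hi => (hB i (mem_range.1 (himage subset_rfl hi))).2)
  · obtain ⟨j, hj, hjmax⟩ := mem_image.1 ((s.image g).max'_mem (hne.image g))
    rw [← hcard hs, hcol _ (himage hs) (hne.image g), ← hjmax]
    exact (hgL j (hs hj)).2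

-- Each arity costs `M` pigeonholes over the colorings of the subsets of an `M`-set.
def ramseyBound (c k s : ℕ) : ℕ := (fun M => (c + 1) ^ (2 ^ M * M))^[k] s

-- `S = ∅` is excluded so that `∅` is end-homogeneous; arity one is plain pigeonhole.
def IsEndHomogeneous (κ : Finset ℕ → G) (A B : Finset ℕ) : Prop :=
  ∀ S ⊆ A, S.Nonempty → ∀ b ∈ B, ∀ b' ∈ B, (∀ x ∈ S, x < b) → (∀ x ∈ S, x < b') →
    κ (insert b S) = κ (insert b' S)

namespace IsEndHomogeneous

variable {κ : Finset ℕ → G} {A B : Finset ℕ}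

lemma mono {B' : Finset ℕ} (h : IsEndHomogeneous κ A B) (hB : B' ⊆ B) :
    IsEndHomogeneous κ A B' :=
  fun S hS hne b hb b' hb' => h S hS hne b (hB hb) b' (hB hb')

lemma insert_of_forall_eq {L L' : Finset ℕ} {a : ℕ} (h : IsEndHomogeneous κ A (A ∪ L))
    (hAL : ∀ x ∈ A, ∀ y ∈ L, x < y) (ha : a ∈ L) (hL' : L' ⊆ L)
    (hsame : ∀ x ∈ L', ∀ y ∈ L', ∀ S ⊆ insert a A, κ (insert x S) = κ (insert y S)) :
    IsEndHomogeneous κ (insert a A) (insert a A ∪ L') := by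
  intro S hS hne b hb b' hb' hSb hSb'
  by_cases haS : a ∈ S
  · have hmem_L' (x) (hx : x ∈ insert a A ∪ L') (hax : a < x) : x ∈ L' := by
      rcases mem_union.1 hx with hx | hx
      · rcases mem_insert.1 hx with rfl | hx
        · exact absurd hax (lt_irrefl x)
        · exact absurd (hAL x hx a ha) hax.asymm
      · exact hx
    exact hsame b (hmem_L' b hb (hSb a haS)) b' (hmem_L' b' hb' (hSb' a haS)) S hS
  · have hSA : S ⊆ A := fun x hx =>
      (mem_insert.1 (hS hx)).resolve_left (by rintro rfl; exact haS hx)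
    have hsub : insert a A ∪ L' ⊆ A ∪ L :=
      union_subset (insert_subset (mem_union_right _ ha) subset_union_left)
        (hL'.trans subset_union_right)
    exact h S hSA hne b (hsub hb) b' (hsub hb') hSb hSb'

lemma exists_color_insert_eq (h : IsEndHomogeneous κ A A) :
    ∃ γ : Finset ℕ → G, ∀ S ⊆ A, S.Nonempty → ∀ b ∈ A, (∀ x ∈ S, x < b) →
      κ (insert b S) = γ S := by
  refine ⟨fun S => if hS : ∃ b ∈ A, ∀ x ∈ S, x < b then κ (insert hS.choose S) else κ S,
    fun S hSA hne b hb hbS => ?_⟩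
  have hS : ∃ b ∈ A, ∀ x ∈ S, x < b := ⟨b, hb, hbS⟩
  simp only [dif_pos hS]
  exact h S hSA hne b hb _ hS.choose_spec.1 hbS hS.choose_spec.2

end IsEndHomogeneous

lemma pow_two_pow_mul_lt (c M r : ℕ) :
    c ^ 2 ^ M * (c + 1) ^ (2 ^ M * r) < (c + 1) ^ (2 ^ M * (r + 1)) := by
  rw [mul_add_one, pow_add, mul_comm ((c + 1) ^ (2 ^ M * r))]
  exact Nat.mul_lt_mul_of_pos_right (Nat.pow_lt_pow_left (Nat.lt_succ_self c)
    (pow_ne_zero _ two_ne_zero)) (pow_pos c.succ_pos _)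

lemma exists_isEndHomogeneous [Fintype G] (κ : Finset ℕ → G) (M : ℕ) :
    ∀ r (A L : Finset ℕ), #A + r ≤ M → (∀ x ∈ A, ∀ y ∈ L, x < y) →
      IsEndHomogeneous κ A (A ∪ L) → (card G + 1) ^ (2 ^ M * r) ≤ #L →
      ∃ A' ⊆ A ∪ L, #A' = #A + r ∧ IsEndHomogeneous κ A' A' := by
  intro r
  induction r with
  | zero => exact fun A L _ _ h _ => ⟨A, subset_union_left, rfl, h.mono subset_union_left⟩
  | succ r ih =>
    intro A L hM hAL h hL
    classical
    have : Nonempty G := ⟨κ ∅⟩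
    set X := (card G + 1) ^ (2 ^ M * r)
    have hc : 0 < card G := card_pos
    have hX : 0 < X := pow_pos (Nat.succ_pos _) _
    have hLne : L.Nonempty := card_pos.1 (hX.trans_le (le_trans (Nat.pow_le_pow_right
      (Nat.succ_pos _) (Nat.mul_le_mul_left _ (Nat.le_succ r))) hL))
    set a := L.min' hLne
    have ha : a ∈ L := L.min'_mem hLne
    have haA : a ∉ A := fun h => lt_irrefl a (hAL a h a ha)
    have hcard : card ((insert a A).powerset → G) * X ≤ #(L.erase a) := by
      rw [card_erase_of_mem ha, Fintype.card_fun, Fintype.card_coe, card_powerset]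
      have hpow := Nat.pow_le_pow_right hc (Nat.pow_le_pow_right two_pos
        (show #(insert a A) ≤ M by rw [card_insert_of_notMem haA]; omega))
      have := (Nat.mul_le_mul_right X hpow).trans_lt (pow_two_pow_mul_lt (card G) M r)
      omega
    let τ : ℕ → (insert a A).powerset → G := fun x S => κ (insert x S)
    obtain ⟨f, -, hf⟩ := exists_le_card_fiber_of_mul_le_card_of_maps_to (f := τ)
      (fun _ _ => mem_univ _) univ_nonempty hcard
    set L' := {x ∈ L.erase a | τ x = f}
    have hL'L : L' ⊆ L := (filter_subset _ _).trans (erase_subset _ _)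
    have haL' (x) (hx : x ∈ L') : a < x :=
      (L.min'_le x (hL'L hx)).lt_of_ne (ne_of_mem_erase (mem_filter.1 hx).1).symm
    have hsame :
        ∀ x ∈ L', ∀ y ∈ L', ∀ S ⊆ insert a A, κ (insert x S) = κ (insert y S) :=
      fun x hx y hy S hS => congrFun ((mem_filter.1 hx).2.trans (mem_filter.1 hy).2.symm)
        ⟨S, mem_powerset.2 hS⟩
    obtain ⟨A', hA', hA'card, hA'hom⟩ := ih (insert a A) L'
      (by rw [card_insert_of_notMem haA]; omega)
      (fun x hx y hy => (mem_insert.1 hx).elim (fun h => h ▸ haL' y hy)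
        fun hx => hAL x hx y (hL'L hy))
      (h.insert_of_forall_eq hAL ha hL'L hsame) hf
    refine ⟨A', hA'.trans (union_subset (insert_subset (mem_union_right _ ha) subset_union_left)
      (hL'L.trans subset_union_right)), by rw [hA'card, card_insert_of_notMem haA]; ring, hA'hom⟩

lemma mul_le_add_one_pow (c s : ℕ) : c * s ≤ (c + 1) ^ (2 ^ s * s) := by
  have hbern : c * s ≤ (c + 1) ^ s := by
    induction s with
    | zero => simp
    | succ s ih =>
      have := Nat.one_le_pow s (c + 1) (Nat.succ_pos c)
      rw [pow_succ]; nlinarith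
  exact hbern.trans
    (Nat.pow_le_pow_right (Nat.succ_pos c) (Nat.le_mul_of_pos_left s (by positivity)))

lemma exists_homogeneous_one [Fintype G] (κ : Finset ℕ → G) {s : ℕ} {X : Finset ℕ}
    (hX : card G * s ≤ #X) :
    ∃ H ⊆ X, #H = s ∧ ∀ T ⊆ H, ∀ T' ⊆ H, #T = 1 → #T' = 1 → κ T = κ T' := by
  classical
  have : Nonempty G := ⟨κ ∅⟩
  obtain ⟨y, -, hy⟩ := exists_le_card_fiber_of_mul_le_card_of_maps_to (f := fun x => κ {x})
    (fun _ _ => mem_univ _) univ_nonempty (by rwa [card_univ])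
  obtain ⟨H, hH, hHs⟩ := exists_subset_card_eq hy
  have hκ (T) (hT : T ⊆ H) (hT1 : #T = 1) : κ T = y := by
    obtain ⟨x, rfl⟩ := card_eq_one.1 hT1
    exact (mem_filter.1 (hH (hT (mem_singleton_self x)))).2
  exact ⟨H, hH.trans (filter_subset _ _), hHs,
    fun T hT T' hT' h1 h1' => (hκ T hT h1).trans (hκ T' hT' h1').symm⟩

theorem exists_homogeneous [Fintype G] (κ : Finset ℕ → G) (k s : ℕ) {X : Finset ℕ}
    (hX : ramseyBound (card G) k s ≤ #X) :
    ∃ H ⊆ X, #H = s ∧ ∀ T ⊆ H, ∀ T' ⊆ H, #T = k → #T' = k → κ T = κ T' := by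
  induction k generalizing κ X with
  | zero =>
    obtain ⟨H, hH, hHs⟩ := exists_subset_card_eq hX
    exact ⟨H, hH, hHs, fun T _ T' _ hT hT' => by rw [card_eq_zero.1 hT, card_eq_zero.1 hT']⟩
  | succ k ih =>
    set M := ramseyBound (card G) k s
    have hXM : (card G + 1) ^ (2 ^ M * M) ≤ #X := by
      rwa [ramseyBound, Function.iterate_succ_apply'] at hX
    rcases Nat.eq_zero_or_pos k with rfl | hk
    · exact exists_homogeneous_one κ ((mul_le_add_one_pow _ s).trans hXM)
    obtain ⟨A, hAX, hAM, hA⟩ := exists_isEndHomogeneous κ M M ∅ X (by simp) (by simp)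
      (fun S hS hne => absurd (subset_empty.1 hS) hne.ne_empty) hXM
    obtain ⟨γ, hγ⟩ := hA.exists_color_insert_eq
    obtain ⟨H, hHA, hHs, hH⟩ := ih γ (X := A) (by rw [hAM, Finset.card_empty, zero_add])
    have hκ (T) (hT : T ⊆ H) (hTk : #T = k + 1) : ∃ S ⊆ H, #S = k ∧ κ T = γ S := by
      have hTne : T.Nonempty := card_pos.1 (by omega)
      have hmax := T.max'_mem hTne
      have hS : #(T.erase (T.max' hTne)) = k := by rw [card_erase_of_mem hmax, hTk]; rfl
      refine ⟨T.erase (T.max' hTne), (erase_subset _ _).trans hT, hS, ?_⟩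
      conv_lhs => rw [← insert_erase hmax]
      exact hγ _ (((erase_subset _ _).trans hT).trans hHA) (card_pos.1 (by omega)) _
        (hHA (hT hmax)) fun x hx =>
          (T.le_max' x (mem_of_mem_erase hx)).lt_of_ne (ne_of_mem_erase hx)
    refine ⟨H, hHA.trans (by simpa using hAX), hHs, fun T hT T' hT' hTk hT'k => ?_⟩
    obtain ⟨S, hSH, hSk, hTS⟩ := hκ T hT hTk
    obtain ⟨S', hS'H, hS'k, hT'S'⟩ := hκ T' hT' hT'k
    rw [hTS, hT'S']
    exact hH S hSH S' hS'H hSk hS'k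

def initialSegment (T : Finset ℕ) (t : ℕ) : Finset ℕ := {a ∈ T | #{b ∈ T | b ≤ a} ≤ t}

lemma initialSegment_union {A U : Finset ℕ} (h : ∀ a ∈ A, ∀ u ∈ U, a < u) :
    initialSegment (A ∪ U) #A = A := by
  ext x
  simp only [initialSegment, mem_filter, mem_union]
  constructor
  · rintro ⟨hx | hx, hcard⟩
    · exact hx
    · have hxA : x ∉ A := fun hxA => lt_irrefl x (h x hxA x hx)
      have hsub : insert x A ⊆ {b ∈ A ∪ U | b ≤ x} :=
        insert_subset (mem_filter.2 ⟨mem_union_right _ hx, le_rfl⟩)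
          fun a ha => mem_filter.2 ⟨mem_union_left _ ha, (h a ha x hx).le⟩
      have := card_le_card hsub
      rw [card_insert_of_notMem hxA] at this
      omega
  · intro hx
    refine ⟨Or.inl hx, card_le_card fun b hb => ?_⟩
    obtain ⟨hb, hbx⟩ := mem_filter.1 hb
    exact (mem_union.1 hb).resolve_right fun hbU => (h x hx b hbU).not_ge hbx

theorem exists_subset_color_eq_comp_card [Fintype G] (c : Finset ℕ → G) (K : ℕ) {X : Finset ℕ}
    (hX : ramseyBound (card G ^ K) K (2 * K) ≤ #X) :
    ∃ Y ⊆ X, #Y = K ∧ ∃ γ : ℕ → G, ∀ S ⊆ Y, S.Nonempty → c S = γ #S := by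
  classical
  obtain ⟨H, hHX, hH2K, hH⟩ :=
    exists_homogeneous (fun T (t : Fin K) => c (initialSegment T (t + 1))) K (2 * K)
      (by simpa using hX)
  obtain ⟨Y, hYH, Z, hZH, hYK, hZK, hYZ⟩ := exists_subsets_card_eq_lt H (a := K) (b := K) (by omega)
  have hpair : ∀ S ⊆ Y, ∀ S' ⊆ Y, S.Nonempty → #S = #S' → c S = c S' := by
    intro S hS S' hS' hne hSS'
    have hSK : #S ≤ K := hYK ▸ card_le_card hS
    obtain ⟨U, hUZ, hU⟩ := exists_subset_card_eq (show K - #S ≤ #Z by omega)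
    have hpad (S') (hS' : S' ⊆ Y) (hSS' : #S = #S') :
        S' ∪ U ⊆ H ∧ #(S' ∪ U) = K ∧ initialSegment (S' ∪ U) #S = S' := by
      have hS'U : ∀ a ∈ S', ∀ u ∈ U, a < u := fun a ha u hu => hYZ a (hS' ha) u (hUZ hu)
      refine ⟨union_subset (hS'.trans hYH) (hUZ.trans hZH), ?_,
        hSS' ▸ initialSegment_union hS'U⟩
      rw [card_union_of_disjoint (disjoint_left.2 fun a ha hu => lt_irrefl a (hS'U a ha a hu)), hU]
      omega
    obtain ⟨hSH, hSU, hSseg⟩ := hpad S hS rfl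
    obtain ⟨hS'H, hS'U, hS'seg⟩ := hpad S' hS' hSS'
    have := congrFun (hH _ hSH _ hS'H hSU hS'U) ⟨#S - 1, by have := card_pos.2 hne; omega⟩
    simp only [Nat.sub_add_cancel (card_pos.2 hne)] at this
    rwa [hSseg, hS'seg] at this
  have hγ (t : ℕ) : ∃ g : G, ∀ S ⊆ Y, S.Nonempty → #S = t → c S = g := by
    by_cases h : ∃ S ⊆ Y, S.Nonempty ∧ #S = t
    · obtain ⟨S₀, hS₀, -, rfl⟩ := h
      exact ⟨c S₀, fun S hS hne hSt => hpair S hS S₀ hS₀ hne hSt⟩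
    · exact ⟨c ∅, fun S hS hne hSt => absurd ⟨S, hS, hne, hSt⟩ h⟩
  choose γ hγ using hγ
  exact ⟨Y, hYH.trans hHX, hYK, γ, fun S hS hne => hγ _ S hS hne rfl⟩

lemma exists_isBlockSeqS_card_eq (Y : Finset ℕ) (u : ℕ → ℕ) (m : ℕ)
    (h : ∑ j ∈ range m, u j ≤ #Y) :
    ∃ X : ℕ → Finset ℕ, (∀ j < m, X j ⊆ Y ∧ #(X j) = u j) ∧ IsBlockSeqS m X := by
  induction m generalizing Y with
  | zero =>
    exact ⟨fun _ => ∅, fun j hj => absurd hj j.not_lt_zero,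
      fun _ j _ hj => absurd hj j.not_lt_zero⟩
  | succ m ih =>
    rw [sum_range_succ] at h
    obtain ⟨Y₁, hY₁, Y₂, hY₂, hY₁card, hY₂card, hY₁₂⟩ :=
      exists_subsets_card_eq_lt Y (a := #Y - u m) (b := u m) (by omega)
    obtain ⟨X, hX, hblock⟩ := ih Y₁ (by omega)
    refine ⟨Function.update X m Y₂, fun j hj => ?_, fun i j hij hj => ?_⟩
    · rcases Nat.lt_succ_iff_lt_or_eq.1 hj with hj | rfl
      · rw [Function.update_of_ne hj.ne]
        exact ⟨(hX j hj).1.trans hY₁, (hX j hj).2⟩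
      · rw [Function.update_self]
        exact ⟨hY₂, hY₂card⟩
    · rw [Function.update_of_ne (show i ≠ m by omega)]
      rcases Nat.lt_succ_iff_lt_or_eq.1 hj with hj | rfl
      · rw [Function.update_of_ne hj.ne]
        exact hblock i j hij hj
      · rw [Function.update_self]
        exact fun a ha b hb => hY₁₂ a ((hX i hij).1 ha) b hb

lemma card_biUnion_of_isBlockSeqS {m : ℕ} {X : ℕ → Finset ℕ} (hX : IsBlockSeqS m X)
    {s : Finset ℕ} (hs : ∀ i ∈ s, i < m) : #(s.biUnion X) = ∑ i ∈ s, #(X i) := by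
  refine card_biUnion fun i hi j hj hij => ?_
  rcases lt_or_gt_of_ne hij with h | h
  · exact disjoint_left.2 fun a ha ha' => lt_irrefl a (hX i j h (hs j hj) a ha a ha')
  · exact disjoint_left.2 fun a ha ha' => lt_irrefl a (hX j i h (hs i hi) a ha' a ha)

lemma stableFamilyBound_le (d : ℕ) : stableFamilyBound 2 d ≤ fAck 3 (3 * d) := by
  induction d with
  | zero => exact Nat.zero_le _
  | succ d ih =>
    set a := fAck 3 (3 * d + 2)
    have h4 : 4 ≤ a := fAck_three_strictMono.monotone (show 2 ≤ 3 * d + 2 by omega)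
    have hpow : 2 ^ 2 ^ stableFamilyBound 2 d ≤ a := by
      rw [show a = 2 ^ 2 ^ fAck 3 (3 * d) by simp only [a, fAck_three_succ]]
      exact Nat.pow_le_pow_right two_pos (Nat.pow_le_pow_right two_pos ih)
    have hlow : fAck 3 (3 * d) < a := fAck_three_strictMono (by omega)
    calc stableFamilyBound 2 (d + 1) ≤ 2 * a := by
          simp only [stableFamilyBound]; omega
      _ ≤ 2 ^ a := by have := three_mul_add_one_le_two_pow h4; omega
      _ = fAck 3 (3 * (d + 1)) := (fAck_three_succ _).symm

lemma maxFamilyBound_le {L : ℕ} (hL : 1 ≤ L) : maxFamilyBound 2 L ≤ (fAck 3)^[2 * L] 1 := by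
  induction L, hL using Nat.le_induction with
  | base => decide
  | succ L _ ih =>
    set z := (fAck 3)^[2 * L] 1
    have hz : 4 ≤ z :=
      (show 4 = (fAck 3)^[2 * 1] 1 by decide) ▸ monotone_iterate_fAck_three (by omega)
    calc maxFamilyBound 2 (L + 1) ≤ fAck 3 (3 * z) + 1 :=
          Nat.succ_le_succ ((stableFamilyBound_le _).trans
            (fAck_three_strictMono.monotone (by omega)))
      _ ≤ fAck 3 (fAck 3 z) :=
          fAck_three_strictMono.lt_iff_lt.2 (three_mul_add_one_le_fAck_three hz)
      _ = (fAck 3)^[2 * (L + 1)] 1 := by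
          rw [show 2 * (L + 1) = 2 * L + 1 + 1 by ring, Function.iterate_succ_apply',
            Function.iterate_succ_apply']

lemma le_stableFamilyBound (r d : ℕ) : d ≤ stableFamilyBound r d := by
  induction d with
  | zero => exact le_rfl
  | succ d ih => simp only [stableFamilyBound]; omega

lemma maxFamilyBound_monotone (r : ℕ) : Monotone (maxFamilyBound r) :=
  monotone_nat_of_le_succ fun _ => (le_stableFamilyBound r _).trans (Nat.le_succ _)

lemma ramseyBound_le_iterate {c s y : ℕ} (hc : c ≤ y) (hs : s ≤ y) (hy : 4 ≤ y) (k : ℕ) :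
    ramseyBound c k s ≤ (2 ^ ·)^[3 * k] y := by
  induction k with
  | zero => exact hs
  | succ k ih =>
    set M := ramseyBound c k s
    set z := (2 ^ ·)^[3 * k] y
    have hyz : y ≤ z := Function.id_le_iterate_of_id_le (fun _ => Nat.lt_two_pow_self.le) _ y
    have hexp : c + 2 * M ≤ 2 ^ z := by
      have := three_mul_add_one_le_two_pow (hy.trans hyz); omega
    calc ramseyBound c (k + 1) s = (c + 1) ^ (2 ^ M * M) := Function.iterate_succ_apply' _ _ _
      _ ≤ (2 ^ c) ^ (2 ^ M * M) := Nat.pow_le_pow_left Nat.lt_two_pow_self _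
      _ = 2 ^ (2 ^ M * M * c) := by rw [← pow_mul, mul_comm c]
      _ ≤ 2 ^ (2 ^ M * 2 ^ M * 2 ^ c) := Nat.pow_le_pow_right two_pos
          (Nat.mul_le_mul (Nat.mul_le_mul_left _ Nat.lt_two_pow_self.le) Nat.lt_two_pow_self.le)
      _ = 2 ^ 2 ^ (c + 2 * M) := by ring
      _ ≤ 2 ^ 2 ^ 2 ^ z := Nat.pow_le_pow_right two_pos (Nat.pow_le_pow_right two_pos hexp)
      _ = (2 ^ ·)^[3 * (k + 1)] y := by
          rw [show 3 * (k + 1) = 3 * k + 1 + 1 + 1 by ring]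
          simp only [Function.iterate_succ_apply', z]

lemma ramseyBound_le_fAck_four {m : ℕ} (hm : 1 ≤ m) :
    ramseyBound (2 ^ maxFamilyBound 2 (2 * m - 1)) (maxFamilyBound 2 (2 * m - 1))
      (2 * maxFamilyBound 2 (2 * m - 1)) ≤ fAck 4 (6 * m - 3) := by
  obtain rfl | hm := hm.eq_or_lt
  · decide
  set K := maxFamilyBound 2 (2 * m - 1)
  have hK : 4 ≤ K :=
    (show maxFamilyBound 2 2 = 4 by decide) ▸ maxFamilyBound_monotone 2 (by omega)
  have hT := fAck_three_strictMono.monotone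
  have hTK : 3 * K + 1 ≤ fAck 3 K := three_mul_add_one_le_fAck_three hK
  have hTK1 : fAck 3 K ≤ fAck 3 (K + 1) := hT (Nat.le_add_right K 1)
  calc ramseyBound (2 ^ K) K (2 * K) ≤ (2 ^ ·)^[3 * K] (fAck 3 (K + 1)) :=
        ramseyBound_le_iterate
          ((Nat.pow_le_pow_right two_pos (Nat.le_add_right K 1)).trans (two_pow_le_fAck_three _))
          (by omega) (by omega) K
    _ = fAck 3 (K + 1 + 3 * K) := iterate_two_pow_fAck_three _ _
    _ ≤ fAck 3 (fAck 3 (fAck 3 K)) := by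
        have := three_mul_add_one_le_fAck_three (hK.trans (by omega) : 4 ≤ fAck 3 K)
        exact hT (by omega)
    _ ≤ (fAck 3)^[2 * (2 * m - 1) + 3] 1 := by
        simp only [Function.iterate_succ_apply']
        exact hT (hT (hT (maxFamilyBound_le (by omega))))
    _ ≤ fAck 4 (6 * m - 3) := monotone_iterate_fAck_three (by omega)

end Folkman

/-- With `N = f₄(6m - 3)` from the Ackermann hierarchy, every 2-coloring of the nonempty
subsets of `{0,…,N-1}` admits a block sequence `(x_i)_{i<m}` of nonempty subsets of
`{0,…,N-1}` on whose combinatorial space the coloring is constant. -/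
theorem folkman_bound (m : ℕ) (hm : 1 ≤ m) :
    ∀ N : ℕ, N = fAck 4 (6 * m - 3) →
    ∀ c : Finset ℕ → Fin 2,
      ∃ X : ℕ → Finset ℕ,
        (∀ i < m, (X i).Nonempty ∧ ∀ a ∈ X i, a < N) ∧ IsBlockSeqS m X ∧
        ∀ x ∈ CombSpaceS m X, ∀ y ∈ CombSpaceS m X, c x = c y := by
  open Folkman Finset in
  rintro N rfl c
  obtain ⟨Y, hYN, hYK, γ, hγ⟩ := exists_subset_color_eq_comp_card c (maxFamilyBound 2 (2 * m - 1))
    (X := range (fAck 4 (6 * m - 3))) (by simpa using ramseyBound_le_fAck_four hm)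
  obtain ⟨u, w, hu, huK, hw⟩ := exists_subset_sum_color_eq γ (m := m) (L := 2 * m - 1)
    (by rw [Fintype.card_fin]; omega)
  obtain ⟨X, hXY, hX⟩ := exists_isBlockSeqS_card_eq Y u m (by simpa [hYK] using huK)
  have hXne (j) (hj : j < m) : (X j).Nonempty := card_pos.1 ((hXY j hj).2 ▸ hu j hj)
  have hcolor : ∀ z ∈ CombSpaceS m X, c z = w := by
    rintro z ⟨s, hs, hsm, rfl⟩
    have hsub : s.biUnion X ⊆ Y := biUnion_subset.2 fun j hj => (hXY j (hsm j hj)).1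
    rw [hγ _ hsub (hs.biUnion fun j hj => hXne j (hsm j hj)),
      card_biUnion_of_isBlockSeqS hX hsm, sum_congr rfl fun j hj => (hXY j (hsm j hj)).2]
    exact hw s (fun j hj => mem_range.2 (hsm j hj)) hs
  exact ⟨X, fun i hi => ⟨hXne i hi, fun a ha => mem_range.1 (hYN ((hXY i hi).1 ha))⟩, hX,
    fun x hx y hy => (hcolor x hx).trans (hcolor y hy).symm⟩
end
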